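/- Let M > 0 and let E₁(h) := (1/2)‖∂_y h‖²_{L²(0,M)} + ∫_0^M 1_{(−∞,0)}(h(y))·h(y) dy for h ∈ H¹(0,M). Then for every h ∈ H¹(0,M) satisfying ∫_0^M Ψ^{-1}(h(y)) dy = 1 (with Ψ as above, increasing with Ψ(1)=0), one has E₁(h) ≥ (1/4)‖∂_y h‖²_{L²(0,M)} − M³ − M|Ψ(1/M)|. -/

import Mathlib

/-!
Since `∫₀ᴹ Ψ⁻¹(h) = 1`, the density `Ψ⁻¹(h)` is at least its mean `1/M` at some point `y₀`,
so `h y₀ ≥ Ψ(1/M)` by monotonicity. The fundamental theorem of calculus then gives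
`h ≥ -|Ψ(1/M)| - ‖∂_y h‖_{L¹}` on all of `(0, M)`, and the pointwise Young inequality
`M |h'| ≤ h'²/4 + M²` bounds `M ‖∂_y h‖_{L¹}` by `(1/4)‖∂_y h‖²_{L²} + M³`.
-/

open MeasureTheory Set

lemma mul_abs_le_sq_div_four_add_sq (c x : ℝ) : c * |x| ≤ x ^ 2 / 4 + c ^ 2 := by
  nlinarith [sq_nonneg (|x| - 2 * c), sq_abs x]

lemma mul_setIntegral_abs_le {α : Type*} [MeasurableSpace α] {μ : Measure α} {s : Set α}
    {f : α → ℝ} (c : ℝ) (hμs : μ s ≠ ⊤) (hf : IntegrableOn f s μ)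
    (hf2 : IntegrableOn (fun x => f x ^ 2) s μ) :
    c * ∫ x in s, |f x| ∂μ ≤ (∫ x in s, f x ^ 2 ∂μ) / 4 + c ^ 2 * μ.real s := by
  have hconst : IntegrableOn (fun _ => c ^ 2) s μ := integrableOn_const hμs
  calc c * ∫ x in s, |f x| ∂μ = ∫ x in s, c * |f x| ∂μ := (integral_const_mul c _).symm
    _ ≤ ∫ x in s, (f x ^ 2 / 4 + c ^ 2) ∂μ :=
        integral_mono (hf.abs.const_mul c) ((hf2.div_const 4).add hconst)
          fun x => mul_abs_le_sq_div_four_add_sq c (f x)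
    _ = (∫ x in s, f x ^ 2 ∂μ) / 4 + c ^ 2 * μ.real s := by
        rw [integral_add (hf2.div_const 4) hconst, integral_div, setIntegral_const, smul_eq_mul,
          mul_comm]

lemma integrableOn_Ioo_of_hasDerivAt_of_sq {f f' : ℝ → ℝ} {a b : ℝ}
    (hderiv : ∀ x ∈ Ioo a b, HasDerivAt f (f' x) x)
    (hf2 : IntegrableOn (fun x => f' x ^ 2) (Ioo a b)) : IntegrableOn f' (Ioo a b) := by
  have hmeas : AEStronglyMeasurable f' (volume.restrict (Ioo a b)) := by
    refine (measurable_deriv f).aestronglyMeasurable.congr ?_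
    filter_upwards [ae_restrict_mem measurableSet_Ioo] with x hx using (hderiv x hx).deriv
  exact ((memLp_two_iff_integrable_sq hmeas).2 hf2).integrable one_le_two

lemma abs_sub_le_setIntegral_abs_of_hasDerivAt {f f' : ℝ → ℝ} {a b x y : ℝ}
    (hderiv : ∀ t ∈ Icc a b, HasDerivAt f (f' t) t) (hf' : IntegrableOn f' (Ioo a b))
    (hx : x ∈ Ioo a b) (hy : y ∈ Ioo a b) :
    |f y - f x| ≤ ∫ t in Ioo a b, |f' t| := by
  have hIoc : uIoc x y ⊆ Ioo a b := fun t ht =>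
    ⟨(lt_min hx.1 hy.1).trans ht.1, ht.2.trans_lt (max_lt hx.2 hy.2)⟩
  have hIcc : uIcc x y ⊆ Icc a b :=
    uIcc_subset_Icc (Ioo_subset_Icc_self hx) (Ioo_subset_Icc_self hy)
  rw [← intervalIntegral.integral_eq_sub_of_hasDerivAt (fun t ht => hderiv t (hIcc ht))
    (intervalIntegrable_iff.2 (hf'.mono_set hIoc))]
  calc |∫ t in x..y, f' t| ≤ ∫ t in uIoc x y, |f' t| := by
        simpa only [Real.norm_eq_abs] using
          intervalIntegral.norm_integral_le_integral_norm_uIoc (f := f') (μ := volume)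
    _ ≤ ∫ t in Ioo a b, |f' t| :=
        setIntegral_mono_set hf'.abs (.of_forall fun _ => abs_nonneg _) hIoc.eventuallyLE

lemma exists_mem_Ioo_inv_le_of_setIntegral_eq_one {g : ℝ → ℝ} {M : ℝ} (hM : 0 < M)
    (hg : ∫ y in Ioo 0 M, g y = 1) : ∃ y ∈ Ioo 0 M, M⁻¹ ≤ g y := by
  have hg_int : IntegrableOn g (Ioo 0 M) := .of_integral_ne_zero (by rw [hg]; exact one_ne_zero)
  simpa [setAverage_eq, hg, hM.le] using
    exists_setAverage_le (by simp [hM]) measure_Ioo_lt_top.ne hg_int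

lemma integrableOn_Ioo_ite_neg {g : ℝ → ℝ} {a b : ℝ} (hg : ContinuousOn g (Icc a b)) :
    IntegrableOn (fun y => if g y < 0 then g y else 0) (Ioo a b) := by
  refine ((hg.inf (continuousOn_const (c := 0))).integrableOn_Icc.mono_set
    Ioo_subset_Icc_self).congr_fun (fun y _ => ?_) measurableSet_Ioo
  split_ifs with hy
  · exact inf_eq_left.2 hy.le
  · exact inf_eq_right.2 (not_lt.1 hy)

theorem stmt14_general (M : ℝ) (hM : 0 < M)
    (Ψ : ℝ → ℝ) (hΨ_mono : StrictMonoOn Ψ (Set.Ioi 0))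
    (Φ : ℝ → ℝ) (hΦ : ∀ r > (0:ℝ), Φ (Ψ r) = r)
    (h h' : ℝ → ℝ)
    (hh_deriv : ∀ y ∈ Set.Icc (0:ℝ) M, HasDerivAt h (h' y) y)
    (hh'2 : IntegrableOn (fun y => (h' y) ^ 2) (Set.Ioo 0 M))
    (hrange : ∀ y ∈ Set.Icc (0:ℝ) M, ∃ r > (0:ℝ), Ψ r = h y)
    (hmass : (∫ y in Set.Ioo (0:ℝ) M, Φ (h y)) = 1) :
    (1/2) * (∫ y in Set.Ioo (0:ℝ) M, (h' y) ^ 2)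
        + (∫ y in Set.Ioo (0:ℝ) M, if h y < 0 then h y else 0)
      ≥ (1/4) * (∫ y in Set.Ioo (0:ℝ) M, (h' y) ^ 2) - M ^ 3 - M * |Ψ M⁻¹| := by
  set A := ∫ y in Ioo 0 M, |h' y|
  have hvol : volume.real (Ioo 0 M) = M := by simp [hM.le]
  have hint : IntegrableOn h' (Ioo 0 M) :=
    integrableOn_Ioo_of_hasDerivAt_of_sq (fun y hy => hh_deriv y (Ioo_subset_Icc_self hy)) hh'2
  obtain ⟨y₀, hy₀, hmean⟩ := exists_mem_Ioo_inv_le_of_setIntegral_eq_one hM hmass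
  obtain ⟨r₀, hr₀, hΨr₀⟩ := hrange y₀ (Ioo_subset_Icc_self hy₀)
  have hy₀_lb : Ψ M⁻¹ ≤ h y₀ := hΨr₀ ▸
    hΨ_mono.monotoneOn (inv_pos.2 hM) hr₀ (by rwa [← hΨr₀, hΦ r₀ hr₀] at hmean)
  have hneg_lb : ∀ y ∈ Ioo 0 M, -(|Ψ M⁻¹| + A) ≤ if h y < 0 then h y else 0 := by
    intro y hy
    have hdiff : -A ≤ h y - h y₀ :=
      (abs_le.1 (abs_sub_le_setIntegral_abs_of_hasDerivAt hh_deriv hint hy₀ hy)).1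
    have hA : 0 ≤ A := setIntegral_nonneg measurableSet_Ioo fun _ _ => abs_nonneg _
    split_ifs <;> linarith [neg_abs_le (Ψ M⁻¹), abs_nonneg (Ψ M⁻¹)]
  have hI := setIntegral_ge_of_const_le_real measurableSet_Ioo measure_Ioo_lt_top.ne hneg_lb
    (integrableOn_Ioo_ite_neg fun y hy => (hh_deriv y hy).continuousAt.continuousWithinAt)
  have hMA := mul_setIntegral_abs_le M measure_Ioo_lt_top.ne hint hh'2
  rw [hvol] at hI hMA
  linarith

/-- Lower bound for `E₁(h) = (1/2)‖∂_y h‖²_{L²(0,M)} + ∫_0^M 1_{h<0} h`: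
for every `h ∈ H¹(0,M)` with `∫_0^M Ψ⁻¹(h) dy = 1` (with `Ψ` increasing, `C¹`,
`Ψ(1) = 0`), one has `E₁(h) ≥ (1/4)‖∂_y h‖²_{L²(0,M)} − M³ − M |Ψ(1/M)|`. -/
theorem stmt14 (M : ℝ) (hM : 0 < M)
    (Ψ : ℝ → ℝ) (hΨ_mono : StrictMonoOn Ψ (Set.Ioi 0))
    (hΨ_C1 : ContDiffOn ℝ 1 Ψ (Set.Ioi 0)) (hΨ1 : Ψ 1 = 0)
    (Φ : ℝ → ℝ) (hΦ : ∀ r > (0:ℝ), Φ (Ψ r) = r)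
    (h h' : ℝ → ℝ) (hh_cont : ContinuousOn h (Set.Icc 0 M))
    (hh_deriv : ∀ y ∈ Set.Icc (0:ℝ) M, HasDerivAt h (h' y) y)
    (hh'2 : IntegrableOn (fun y => (h' y) ^ 2) (Set.Ioo 0 M))
    (hrange : ∀ y ∈ Set.Icc (0:ℝ) M, ∃ r > (0:ℝ), Ψ r = h y)
    (hmass : (∫ y in Set.Ioo (0:ℝ) M, Φ (h y)) = 1) :
    (1/2) * (∫ y in Set.Ioo (0:ℝ) M, (h' y) ^ 2)
        + (∫ y in Set.Ioo (0:ℝ) M, if h y < 0 then h y else 0)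
      ≥ (1/4) * (∫ y in Set.Ioo (0:ℝ) M, (h' y) ^ 2) - M ^ 3 - M * |Ψ M⁻¹| :=
  stmt14_general M hM Ψ hΨ_mono Φ hΦ h h' hh_deriv hh'2 hrange hmass
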